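/- Equivalently in normalized form: for T ~ Multinomial(n, q) with q in the simplex Δ_m and any multi-index α, |E[∏ⱼ (Tⱼ/n - qⱼ)^{αⱼ}]| ≤ C(α,m) · n^{-‖α‖₁/2}. -/

import Mathlib

/-!
Write `T = ∑ᵢ e(ωᵢ)` as a sum of `n` independent one-hot vectors, so that `T - n q` is a sum of
the centered indicators `e(ωᵢ) - q`. Expanding `∏ⱼ (Tⱼ - n qⱼ)^{αⱼ}` distributes the `s = ‖α‖₁`
factors over the `n` trials by maps `g`; by independence the expectation of a term is the product
over trials of the mixed central moments of the factors sent there. Such a moment vanishes when a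
trial receives exactly one factor and is at most `1` in absolute value, so only maps `g` whose
nonempty fibres have size `≥ 2` survive. These have at most `s / 2` values, hence number at most
`(s / 2)^s n^{s / 2}`, and dividing by `n^s` gives the bound.
-/

/-- The multivariate Bernstein basis polynomial `b_{n,ν}(q) = (n!/∏ νⱼ!) ∏ qⱼ^{νⱼ}`. -/
noncomputable def bernBasis {m : ℕ} (ν : Fin m → ℕ) (q : Fin m → ℝ) : ℝ :=
  (Nat.multinomial Finset.univ ν : ℝ) * ∏ j, q j ^ ν j

open Finset

section Occurrences

variable {ι κ : Type*} [Fintype ι] [DecidableEq κ]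

def occurrences (ω : ι → κ) (j : κ) : ℕ := #{i | ω i = j}

lemma occurrences_eq_sum_single (ω : ι → κ) :
    occurrences ω = ⇑(∑ i, Finsupp.single (ω i) 1) := by
  ext j
  simp only [occurrences, Finsupp.finsetSum_apply, Finsupp.single_apply, sum_boole, Nat.cast_id]

variable [Fintype κ]

lemma sum_occurrences (ω : ι → κ) : ∑ j, occurrences ω j = Fintype.card ι :=
  (card_eq_sum_card_fiberwise fun i _ => mem_univ (ω i)).symm

lemma prod_comp_eq_prod_pow_occurrences {M : Type*} [CommMonoid M] (f : κ → M) (ω : ι → κ) :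
    ∏ i, f (ω i) = ∏ j, f j ^ occurrences ω j := by
  simp only [occurrences, ← prod_const, prod_fiberwise']

/-- Read off the coefficient of `X^ν` in `(∑ⱼ Xⱼ)^n = ∑_ω ∏ᵢ X_{ωᵢ}`. -/
lemma card_occurrences_eq [DecidableEq ι] (ν : κ → ℕ) (hν : ∑ j, ν j = Fintype.card ι) :
    #{ω : ι → κ | occurrences ω = ν} = Nat.multinomial univ ν := by
  set d : κ →₀ ℕ := Finsupp.equivFunOnFinite.symm ν
  have hexpand : (∑ j, MvPolynomial.X j : MvPolynomial κ ℕ) ^ Fintype.card ι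
      = ∑ ω : ι → κ, MvPolynomial.monomial (∑ i, Finsupp.single (ω i) 1) 1 := by
    rw [← card_univ, ← prod_const, prod_univ_sum, Fintype.piFinset_univ]
    simp only [MvPolynomial.monomial_sum_one, MvPolynomial.X]
  have hcoeff := MvPolynomial.coeff_sum_X_pow_of_fintype (R := ℕ) d (Fintype.card ι)
  rw [hexpand, MvPolynomial.coeff_sum] at hcoeff
  simp only [MvPolynomial.coeff_monomial, sum_boole, Nat.cast_id] at hcoeff
  have hd : d.sum (fun _ k => k) = Fintype.card ι := by
    rw [Finsupp.sum_fintype _ _ fun _ => rfl]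
    exact hν
  rw [if_pos hd, Finsupp.multinomial_eq_of_support_subset (subset_univ _)] at hcoeff
  convert hcoeff using 4 with ω
  · rw [occurrences_eq_sum_single, Equiv.eq_symm_apply]
    rfl
  · rfl

end Occurrences

lemma sum_antidiagonalTuple_mul_bernBasis {m n : ℕ} (F : (Fin m → ℕ) → ℝ) (q : Fin m → ℝ) :
    ∑ ν ∈ Nat.antidiagonalTuple m n, F ν * bernBasis ν q
      = ∑ ω : Fin n → Fin m, F (occurrences ω) * ∏ i, q (ω i) := by
  rw [← sum_fiberwise_of_maps_to (g := occurrences) (t := Nat.antidiagonalTuple m n)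
    fun ω _ => Nat.mem_antidiagonalTuple.2 ((sum_occurrences ω).trans (Fintype.card_fin n))]
  refine sum_congr rfl fun ν hν => ?_
  have hfiber : ∀ ω ∈ ({ω | occurrences ω = ν} : Finset (Fin n → Fin m)),
      F (occurrences ω) * ∏ i, q (ω i) = F ν * ∏ j, q j ^ ν j := by
    intro ω hω
    rw [prod_comp_eq_prod_pow_occurrences, (mem_filter.1 hω).2]
  rw [sum_congr rfl hfiber, sum_const, card_occurrences_eq ν
    ((Nat.mem_antidiagonalTuple.1 hν).trans (Fintype.card_fin n).symm), nsmul_eq_mul, bernBasis]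
  ring

section CentralMoments

variable {ι κ P : Type*} [Fintype ι] [DecidableEq κ]

def centeredIndicator (q : κ → ℝ) (c j : κ) : ℝ := (if c = j then 1 else 0) - q j

lemma sum_centeredIndicator (q : κ → ℝ) (ω : ι → κ) (j : κ) :
    ∑ i, centeredIndicator q (ω i) j = occurrences ω j - Fintype.card ι * q j := by
  simp [centeredIndicator, occurrences, sum_sub_distrib, sum_boole]

lemma abs_centeredIndicator_le_one {q : κ → ℝ} (hq0 : ∀ j, 0 ≤ q j) (hq1 : ∀ j, q j ≤ 1)
    (c j : κ) : |centeredIndicator q c j| ≤ 1 := by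
  unfold centeredIndicator
  have := hq0 j
  have := hq1 j
  split_ifs <;> rw [abs_le] <;> constructor <;> linarith

variable [Fintype κ]

lemma prod_pow_sum_eq_sum_sigma {R : Type*} [CommSemiring R] [DecidableEq ι]
    (α : κ → ℕ) (h : ι → κ → R) :
    ∏ j, (∑ i, h i j) ^ α j = ∑ g : (Σ j, Fin (α j)) → ι, ∏ p, h (g p) p.1 := by
  rw [← Fintype.prod_sum (fun p : Σ j, Fin (α j) => fun i => h i p.1), ← univ_sigma_univ,
    prod_sigma]
  simp only [prod_const, card_univ, Fintype.card_fin]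

/-- The mixed central moment `E[∏_{p ∈ B} (e(c) - q)_{ℓ p}]` of a single trial `c ~ q`. -/
noncomputable def trialMoment (q : κ → ℝ) (ℓ : P → κ) (B : Finset P) : ℝ :=
  ∑ c, q c * ∏ p ∈ B, centeredIndicator q c (ℓ p)

lemma trialMoment_singleton {q : κ → ℝ} (hq1 : ∑ j, q j = 1) (ℓ : P → κ) (p : P) :
    trialMoment q ℓ {p} = 0 := by
  simp [trialMoment, centeredIndicator, mul_sub, ← sum_mul, hq1]

lemma abs_trialMoment_le_one {q : κ → ℝ} (hq0 : ∀ j, 0 ≤ q j) (hq1 : ∑ j, q j = 1)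
    (ℓ : P → κ) (B : Finset P) : |trialMoment q ℓ B| ≤ 1 := by
  have hq_le : ∀ j, q j ≤ 1 := fun j => hq1 ▸ single_le_sum (fun j _ => hq0 j) (mem_univ j)
  calc |trialMoment q ℓ B| ≤ ∑ c, q c * ∏ p ∈ B, |centeredIndicator q c (ℓ p)| := by
        refine (abs_sum_le_sum_abs _ _).trans (sum_le_sum fun c _ => ?_)
        rw [abs_mul, abs_prod, abs_of_nonneg (hq0 c)]
    _ ≤ ∑ c, q c * 1 := by
        gcongr with c
        · exact hq0 c
        · exact prod_le_one (fun _ _ => abs_nonneg _)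
            fun p _ => abs_centeredIndicator_le_one hq0 hq_le c (ℓ p)
    _ = 1 := by simp [hq1]

variable [DecidableEq ι]

lemma sum_prod_mul_prod_centeredIndicator [Fintype P] (q : κ → ℝ) (ℓ : P → κ) (g : P → ι) :
    ∑ ω : ι → κ, (∏ i, q (ω i)) * ∏ p, centeredIndicator q (ω (g p)) (ℓ p)
      = ∏ i, trialMoment q ℓ {p | g p = i} := by
  have hfiber : ∀ ω : ι → κ, ∏ p, centeredIndicator q (ω (g p)) (ℓ p)
      = ∏ i, ∏ p ∈ {p | g p = i}, centeredIndicator q (ω i) (ℓ p) := by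
    intro ω
    rw [← prod_fiberwise univ g]
    refine prod_congr rfl fun i _ => prod_congr rfl fun p hp => ?_
    rw [(mem_filter.1 hp).2]
  simp only [hfiber, ← prod_mul_distrib, trialMoment, Fintype.prod_sum]

theorem sum_prod_occurrences_sub_pow_eq (q : κ → ℝ) (α : κ → ℕ) :
    ∑ ω : ι → κ, (∏ i, q (ω i)) * ∏ j, ((occurrences ω j : ℝ) - Fintype.card ι * q j) ^ α j
      = ∑ g : (Σ j, Fin (α j)) → ι, ∏ i, trialMoment q Sigma.fst {p | g p = i} := by
  simp only [← sum_centeredIndicator, prod_pow_sum_eq_sum_sigma, mul_sum]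
  rw [sum_comm]
  simp only [sum_prod_mul_prod_centeredIndicator]

end CentralMoments

section Counting

variable {P ι : Type*} [Fintype P] [DecidableEq ι]

lemma card_image_le_half_of_card_fiber_ne_one (g : P → ι) (hg : ∀ i, #{p | g p = i} ≠ 1) :
    #(univ.image g) ≤ Fintype.card P / 2 := by
  have hfiber : ∀ i ∈ univ.image g, 2 ≤ #{p | g p = i} := by
    intro i hi
    obtain ⟨p, -, rfl⟩ := mem_image.1 hi
    have : 0 < #{p' | g p' = g p} := card_pos.2 ⟨p, by simp⟩
    have := hg (g p)
    omega
  have := card_nsmul_le_sum _ _ 2 hfiber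
  rw [← card_eq_sum_card_image, card_univ, smul_eq_mul] at this
  omega

lemma exists_comp_eq_of_card_image_le [Nonempty ι] {t : ℕ} (g : P → ι)
    (ht : #(univ.image g) ≤ t) : ∃ (e : Fin t → ι) (h : P → Fin t), e ∘ h = g := by
  set S := univ.image g
  let h : P → Fin t := fun p => Fin.castLE ht (S.equivFin ⟨g p, mem_image_of_mem g (mem_univ p)⟩)
  refine ⟨Function.extend (Fin.castLE ht) (fun x => (S.equivFin.symm x : ι))
    (fun _ => Classical.arbitrary ι), h, funext fun p => ?_⟩
  simp [h, (Fin.castLE_injective ht).extend_apply]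

/-- Every such `g` factors as `P → Fin (|P| / 2) → ι`. -/
lemma card_filter_card_fiber_ne_one_le [DecidableEq P] [Fintype ι] [Nonempty ι] :
    #{g : P → ι | ∀ i, #{p | g p = i} ≠ 1}
      ≤ (Fintype.card P / 2) ^ Fintype.card P * Fintype.card ι ^ (Fintype.card P / 2) := by
  set t := Fintype.card P / 2
  have hsurj : Set.SurjOn (fun eh : (Fin t → ι) × (P → Fin t) => eh.1 ∘ eh.2)
      (univ : Finset ((Fin t → ι) × (P → Fin t)))
      ({g : P → ι | ∀ i, #{p | g p = i} ≠ 1} : Finset (P → ι)) := by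
    intro g hg
    obtain ⟨e, h, rfl⟩ := exists_comp_eq_of_card_image_le g
      (card_image_le_half_of_card_fiber_ne_one g (mem_filter.1 hg).2)
    exact ⟨(e, h), mem_univ _, rfl⟩
  refine (card_le_card_of_surjOn _ hsurj).trans_eq ?_
  simp [mul_comm]

end Counting

theorem abs_sum_prod_occurrences_sub_pow_le {ι κ : Type*} [Fintype ι] [DecidableEq ι]
    [Nonempty ι] [Fintype κ] [DecidableEq κ] {q : κ → ℝ} (hq0 : ∀ j, 0 ≤ q j)
    (hq1 : ∑ j, q j = 1) (α : κ → ℕ) :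
    |∑ ω : ι → κ, (∏ i, q (ω i)) * ∏ j, ((occurrences ω j : ℝ) - Fintype.card ι * q j) ^ α j|
      ≤ (((∑ j, α j) / 2 : ℕ) : ℝ) ^ (∑ j, α j) * (Fintype.card ι : ℝ) ^ ((∑ j, α j) / 2) := by
  have hcard : Fintype.card (Σ j, Fin (α j)) = ∑ j, α j := by simp
  have hterm : ∀ g : (Σ j, Fin (α j)) → ι,
      |∏ i, trialMoment q Sigma.fst {p | g p = i}|
        ≤ if ∀ i, #{p | g p = i} ≠ 1 then 1 else 0 := by
    intro g
    split_ifs with hg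
    · rw [abs_prod]
      exact prod_le_one (fun _ _ => abs_nonneg _)
        fun i _ => abs_trialMoment_le_one hq0 hq1 _ _
    · push Not at hg
      obtain ⟨i, hi⟩ := hg
      obtain ⟨p, hp⟩ := card_eq_one.1 hi
      rw [prod_eq_zero (mem_univ i) (hp ▸ trialMoment_singleton hq1 _ p), abs_zero]
  rw [sum_prod_occurrences_sub_pow_eq]
  calc _ ≤ ∑ g : (Σ j, Fin (α j)) → ι, |∏ i, trialMoment q Sigma.fst {p | g p = i}| :=
        abs_sum_le_sum_abs _ _
    _ ≤ (#{g : (Σ j, Fin (α j)) → ι | ∀ i, #{p | g p = i} ≠ 1} : ℝ) := by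
        rw [← sum_boole]
        exact sum_le_sum fun g _ => hterm g
    _ ≤ _ := by
        rw [← hcard]
        exact_mod_cast card_filter_card_fiber_ne_one_le

lemma prod_div_sub_pow_eq {κ : Type*} [Fintype κ] {n : ℝ} (hn : n ≠ 0) (x q : κ → ℝ)
    (α : κ → ℕ) :
    ∏ j, (x j / n - q j) ^ α j = n⁻¹ ^ (∑ j, α j) * ∏ j, (x j - n * q j) ^ α j := by
  have h : ∀ j, x j / n - q j = n⁻¹ * (x j - n * q j) := fun j => by field_simp
  simp only [h, mul_pow, prod_mul_distrib, prod_pow_eq_pow_sum]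

lemma inv_pow_mul_pow_half_le {n : ℕ} (hn : 0 < n) (s : ℕ) :
    (n : ℝ)⁻¹ ^ s * (n : ℝ) ^ (s / 2) ≤ (n : ℝ) ^ (-(s : ℝ) / 2) := by
  have hn1 : (1 : ℝ) ≤ n := by exact_mod_cast hn
  rw [← Real.rpow_natCast, ← Real.rpow_natCast, Real.inv_rpow (by positivity),
    ← Real.rpow_neg (by positivity), ← Real.rpow_add (by positivity)]
  apply Real.rpow_le_rpow_of_exponent_le hn1
  have : ((s / 2 : ℕ) : ℝ) * 2 ≤ s := by exact_mod_cast Nat.div_mul_le_self s 2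
  linarith

/-- Normalized centered multinomial moment bound: for `T ~ Multinomial(n,q)` and any
multi-index `α`, `|E[∏ⱼ (Tⱼ/n - qⱼ)^{αⱼ}]| ≤ C(α,m) · n^{-‖α‖₁/2}`. -/
theorem bernstein_normalized_moment_bound (m : ℕ) (α : Fin m → ℕ) :
    ∃ C : ℝ, 0 < C ∧ ∀ n : ℕ, 0 < n → ∀ q : Fin m → ℝ,
      (∀ j, 0 ≤ q j) → (∑ j, q j = 1) →
      |∑ ν ∈ Finset.Nat.antidiagonalTuple m n,
          (∏ j, ((ν j : ℝ) / n - q j) ^ α j) * bernBasis ν q|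
        ≤ C * (n : ℝ) ^ (-(∑ j, (α j : ℝ)) / 2) := by
  set s := ∑ j, α j
  refine ⟨((s / 2 : ℕ) : ℝ) ^ s + 1, by positivity, fun n hn q hq0 hq1 => ?_⟩
  have : Nonempty (Fin n) := ⟨⟨0, hn⟩⟩
  have hn' : (n : ℝ) ≠ 0 := by positivity
  have hmoment := abs_sum_prod_occurrences_sub_pow_le (ι := Fin n) hq0 hq1 α
  rw [Fintype.card_fin] at hmoment
  have hnormalize : |∑ ν ∈ Nat.antidiagonalTuple m n,
      (∏ j, ((ν j : ℝ) / n - q j) ^ α j) * bernBasis ν q|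
        = (n : ℝ)⁻¹ ^ s * |∑ ω : Fin n → Fin m,
            (∏ i, q (ω i)) * ∏ j, ((occurrences ω j : ℝ) - n * q j) ^ α j| := by
    rw [sum_antidiagonalTuple_mul_bernBasis, ← abs_of_pos (by positivity : (0 : ℝ) < _ ^ s),
      ← abs_mul, mul_sum]
    congr 1
    refine sum_congr rfl fun ω _ => ?_
    rw [prod_div_sub_pow_eq hn']
    ring
  have hs : ∑ j, (α j : ℝ) = s := by push_cast [s]; rfl
  rw [hnormalize, hs]
  calc (n : ℝ)⁻¹ ^ s * |_| ≤ (n : ℝ)⁻¹ ^ s * (((s / 2 : ℕ) : ℝ) ^ s * (n : ℝ) ^ (s / 2)) :=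
        mul_le_mul_of_nonneg_left hmoment (by positivity)
    _ = ((s / 2 : ℕ) : ℝ) ^ s * ((n : ℝ)⁻¹ ^ s * (n : ℝ) ^ (s / 2)) := by ring
    _ ≤ (((s / 2 : ℕ) : ℝ) ^ s + 1) * (n : ℝ) ^ (-(s : ℝ) / 2) :=
        mul_le_mul (le_add_of_nonneg_right zero_le_one) (inv_pow_mul_pow_half_le hn s)
          (by positivity) (by positivity)
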